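/- The 2×2 Jacobian matrix (∂Lᵢ/∂Kⱼ) of the total geodesic curvatures of a spherical bigon is symmetric and positive definite: its off-diagonal entries are negative, and each row sum ∂(L₁+L₂)/∂Kᵢ is positive, hence it is strictly diagonally dominant with positive diagonal. -/

import Mathlib

/-!
Write `u = cot r₁ = exp K₁` and `v = cot r₂ = exp K₂`, so that `L₁ = 2u β₁ / √(1 + u²)` with
`cot β₁ = (v + u cos θ) / (√(1 + u²) sin θ)`. The off-diagonal entry
`∂L₁/∂K₂ = -2uv sin θ / (sin² θ + u² + v² + 2uv cos θ)` is symmetric in `u, v` and negative.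
The row sum is the Euler sum `u ∂ᵤL₁ + v ∂ᵥL₁`, which collapses to
`2u (arccot A - A / (1 + A²)) / (1 + u²)^{3/2}` with `A = cot β₁`; this is positive since
`A / (1 + A²) = sin (2 arccot A) / 2 < arccot A`. Finally, a symmetric matrix with nonpositive
off-diagonal entries has `xᵀ J x = ∑ᵢ (∑ⱼ Jᵢⱼ) xᵢ² - ½ ∑ᵢⱼ Jᵢⱼ (xᵢ - xⱼ)²`, so positive row sums
make it positive definite.
-/

open Real Set

/-- The inverse cotangent, valued in `(0, π)`. -/
noncomputable def arccot (x : ℝ) : ℝ := π / 2 - Real.arctan x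

/-- Total geodesic curvature `L₁` of the first circle of a spherical bigon, as a
function of `(K₁, K₂)` where `Kᵢ = ln (cot rᵢ)`, with intersection angle `θ`. -/
noncomputable def Lone (θ K₁ K₂ : ℝ) : ℝ :=
  Real.exp K₁ *
    (2 * arccot ((Real.exp K₂ * Real.sin (arccot (Real.exp K₁))
        + Real.cos (arccot (Real.exp K₁)) * Real.cos θ) / Real.sin θ)
      * Real.sin (arccot (Real.exp K₁)))

/-- The Jacobian matrix `(∂Lᵢ/∂Kⱼ)` of the total geodesic curvatures of a
spherical bigon. -/
noncomputable def bigonJacobian (θ K₁ K₂ : ℝ) : Matrix (Fin 2) (Fin 2) ℝ :=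
  !![deriv (fun K => Lone θ K K₂) K₁, deriv (fun K => Lone θ K₁ K) K₂;
     deriv (fun K => Lone θ K₂ K) K₁, deriv (fun K => Lone θ K K₁) K₂]


namespace Matrix

theorem sum_mul_mul_eq_of_isSymm {n : Type*} [Fintype n] {A : Matrix n n ℝ}
    (hA : A.IsSymm) (x : n → ℝ) :
    ∑ i, ∑ j, x i * A i j * x j =
      ∑ i, (∑ j, A i j) * x i ^ 2 - (∑ i, ∑ j, A i j * (x i - x j) ^ 2) / 2 := by
  have hswap : ∑ i, ∑ j, A i j * x j ^ 2 = ∑ i, ∑ j, A i j * x i ^ 2 := by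
    rw [Finset.sum_comm]
    simp_rw [hA.apply]
  have hexpand : ∑ i, ∑ j, A i j * (x i - x j) ^ 2 =
      ∑ i, ∑ j, A i j * x i ^ 2 + ∑ i, ∑ j, A i j * x j ^ 2
        - 2 * ∑ i, ∑ j, x i * A i j * x j := by
    simp only [Finset.mul_sum, ← Finset.sum_add_distrib, ← Finset.sum_sub_distrib]
    refine Finset.sum_congr rfl fun i _ => Finset.sum_congr rfl fun j _ => by ring
  rw [hexpand, hswap]
  simp only [Finset.sum_mul]
  ring

theorem posDef_of_offDiag_nonpos_of_rowSum_pos {n : Type*} [Fintype n]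
    {A : Matrix n n ℝ} (hA : A.IsSymm) (hoff : ∀ i j, i ≠ j → A i j ≤ 0)
    (hrow : ∀ i, 0 < ∑ j, A i j) : A.PosDef := by
  refine posDef_iff_dotProduct_mulVec.mpr ⟨isHermitian_iff_isSelfAdjoint.mpr hA, fun x hx => ?_⟩
  have hquad : star x ⬝ᵥ (A *ᵥ x) = ∑ i, ∑ j, x i * A i j * x j := by
    simp [dotProduct, mulVec, Finset.mul_sum, mul_assoc]
  obtain ⟨k, hk⟩ := Function.ne_iff.mp hx
  have hdiag : 0 < ∑ i, (∑ j, A i j) * x i ^ 2 :=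
    Finset.sum_pos' (fun i _ => mul_nonneg (hrow i).le (sq_nonneg _))
      ⟨k, Finset.mem_univ k, mul_pos (hrow k) (sq_pos_of_ne_zero hk)⟩
  have hoffsum : ∑ i, ∑ j, A i j * (x i - x j) ^ 2 ≤ 0 := by
    refine Finset.sum_nonpos fun i _ => Finset.sum_nonpos fun j _ => ?_
    obtain rfl | hij := eq_or_ne i j
    · simp
    · exact mul_nonpos_of_nonpos_of_nonneg (hoff i j hij) (sq_nonneg _)
  rw [hquad, sum_mul_mul_eq_of_isSymm hA]
  linarith

end Matrix

lemma sin_arccot (x : ℝ) : sin (arccot x) = 1 / √(1 + x ^ 2) := by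
  rw [arccot, sin_pi_div_two_sub, cos_arctan]

lemma cos_arccot (x : ℝ) : cos (arccot x) = x / √(1 + x ^ 2) := by
  rw [arccot, cos_pi_div_two_sub, sin_arctan]

lemma arccot_pos (x : ℝ) : 0 < arccot x := sub_pos.mpr (arctan_lt_pi_div_two x)

lemma hasDerivAt_arccot (x : ℝ) : HasDerivAt arccot (-(1 / (1 + x ^ 2))) x :=
  (hasDerivAt_arctan x).const_sub (π / 2)

lemma div_one_add_sq_lt_arccot (x : ℝ) : x / (1 + x ^ 2) < arccot x := by
  have hsc : x / (1 + x ^ 2) = sin (2 * arccot x) / 2 := by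
    rw [sin_two_mul, sin_arccot, cos_arccot]
    field_simp
    rw [sq_sqrt (by positivity)]
  rw [hsc]
  linarith [sin_lt (mul_pos two_pos (arccot_pos x))]

/-- `cot βᵢ` by the cotangent four-part formula, in terms of `u = cot r₁`, `v = cot r₂`. -/
noncomputable def cotBeta (θ u v : ℝ) : ℝ := (v + u * cos θ) / (√(1 + u ^ 2) * sin θ)

noncomputable def bigonCurvature (θ u v : ℝ) : ℝ := 2 * (u / √(1 + u ^ 2)) * arccot (cotBeta θ u v)

noncomputable def bigonDenom (θ u v : ℝ) : ℝ := sin θ ^ 2 + u ^ 2 + v ^ 2 + 2 * u * v * cos θ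

lemma bigonDenom_comm (θ u v : ℝ) : bigonDenom θ u v = bigonDenom θ v u := by
  unfold bigonDenom
  ring

lemma bigonDenom_eq_sq_add_sq (θ u v : ℝ) :
    bigonDenom θ u v = (√(1 + u ^ 2) * sin θ) ^ 2 + (v + u * cos θ) ^ 2 := by
  rw [bigonDenom, mul_pow, sq_sqrt (by positivity)]
  linear_combination (-u ^ 2) * sin_sq_add_cos_sq θ

lemma bigonDenom_pos {θ : ℝ} (hs : sin θ ≠ 0) (u v : ℝ) : 0 < bigonDenom θ u v := by
  have hw : √(1 + u ^ 2) ≠ 0 := (sqrt_pos.2 (by positivity)).ne'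
  rw [bigonDenom_eq_sq_add_sq]
  positivity

lemma one_add_cotBeta_sq {θ : ℝ} (hs : sin θ ≠ 0) (u v : ℝ) :
    1 + cotBeta θ u v ^ 2 = bigonDenom θ u v / (√(1 + u ^ 2) * sin θ) ^ 2 := by
  have hw : √(1 + u ^ 2) ≠ 0 := (sqrt_pos.2 (by positivity)).ne'
  rw [bigonDenom_eq_sq_add_sq, cotBeta]
  field_simp

lemma lone_eq_bigonCurvature (θ K₁ K₂ : ℝ) :
    Lone θ K₁ K₂ = bigonCurvature θ (exp K₁) (exp K₂) := by
  have hw : √(1 + exp K₁ ^ 2) ≠ 0 := (sqrt_pos.2 (by positivity)).ne'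
  rw [Lone, bigonCurvature, cotBeta, sin_arccot, cos_arccot]
  field_simp

lemma hasDerivAt_bigonCurvature_snd {θ : ℝ} (hs : sin θ ≠ 0) (u v : ℝ) :
    HasDerivAt (bigonCurvature θ u) (-(2 * u * sin θ) / bigonDenom θ u v) v := by
  have hw : √(1 + u ^ 2) ≠ 0 := (sqrt_pos.2 (by positivity)).ne'
  have hD := (bigonDenom_pos hs u v).ne'
  have hA : HasDerivAt (cotBeta θ u) (1 / (√(1 + u ^ 2) * sin θ)) v :=
    ((hasDerivAt_id v).add_const _).div_const _
  refine (((hasDerivAt_arccot _).comp v hA).const_mul (2 * (u / √(1 + u ^ 2)))).congr_deriv ?_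
  rw [one_add_cotBeta_sq hs]
  field_simp

lemma hasDerivAt_bigonCurvature_fst {θ : ℝ} (hs : sin θ ≠ 0) (u v : ℝ) :
    HasDerivAt (bigonCurvature θ · v)
      (2 * arccot (cotBeta θ u v) / √(1 + u ^ 2) ^ 3
        + 2 * u * sin θ * (u * v - cos θ) / (√(1 + u ^ 2) ^ 2 * bigonDenom θ u v)) u := by
  have hw : √(1 + u ^ 2) ≠ 0 := (sqrt_pos.2 (by positivity)).ne'
  have hw2 : √(1 + u ^ 2) ^ 2 = 1 + u ^ 2 := sq_sqrt (by positivity)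
  have hD := (bigonDenom_pos hs u v).ne'
  have hsqrt : HasDerivAt (fun x => √(1 + x ^ 2)) (u / √(1 + u ^ 2)) u := by
    refine (((hasDerivAt_pow 2 u).const_add 1).sqrt (by positivity)).congr_deriv ?_
    field_simp
    norm_num
  have hq : HasDerivAt (fun x => x / √(1 + x ^ 2)) (1 / √(1 + u ^ 2) ^ 3) u := by
    refine ((hasDerivAt_id u).div hsqrt hw).congr_deriv ?_
    simp only [id_eq]
    field_simp
    linear_combination hw2
  have hA : HasDerivAt (cotBeta θ · v) ((cos θ - u * v) / (√(1 + u ^ 2) ^ 3 * sin θ)) u := by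
    refine ((((hasDerivAt_id u).mul_const (cos θ)).const_add v).div
      (hsqrt.mul_const (sin θ)) (mul_ne_zero hw hs)).congr_deriv ?_
    simp only [id_eq]
    field_simp
    linear_combination cos θ * hw2
  refine ((hq.const_mul 2).mul ((hasDerivAt_arccot _).comp u hA)).congr_deriv ?_
  rw [Function.comp_apply, one_add_cotBeta_sq hs]
  field_simp
  ring

lemma bigonCurvature_eulerSum_pos {θ : ℝ} (hs : 0 < sin θ) {u : ℝ} (hu : 0 < u) (v : ℝ) :
    0 < u * deriv (bigonCurvature θ · v) u + v * deriv (bigonCurvature θ u) v := by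
  have hw : 0 < √(1 + u ^ 2) := sqrt_pos.2 (by positivity)
  have hw2 : √(1 + u ^ 2) ^ 2 = 1 + u ^ 2 := sq_sqrt (by positivity)
  have hD := (bigonDenom_pos hs.ne' u v).ne'
  have hA : cotBeta θ u v / (1 + cotBeta θ u v ^ 2)
      = √(1 + u ^ 2) * sin θ * (v + u * cos θ) / bigonDenom θ u v := by
    rw [one_add_cotBeta_sq hs.ne', cotBeta]
    field_simp
  have heuler : u * deriv (bigonCurvature θ · v) u + v * deriv (bigonCurvature θ u) v
      = 2 * u / √(1 + u ^ 2) ^ 3 *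
          (arccot (cotBeta θ u v) - cotBeta θ u v / (1 + cotBeta θ u v ^ 2)) := by
    rw [(hasDerivAt_bigonCurvature_fst hs.ne' u v).deriv,
      (hasDerivAt_bigonCurvature_snd hs.ne' u v).deriv, hA]
    field_simp
    linear_combination (-(√(1 + u ^ 2) * sin θ * v)) * hw2
  rw [heuler]
  exact mul_pos (by positivity) (sub_pos.2 (div_one_add_sq_lt_arccot _))

lemma deriv_lone_fst {θ : ℝ} (hs : sin θ ≠ 0) (K₁ K₂ : ℝ) :
    deriv (fun K => Lone θ K K₂) K₁ = exp K₁ * deriv (bigonCurvature θ · (exp K₂)) (exp K₁) := by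
  simp_rw [lone_eq_bigonCurvature]
  exact ((hasDerivAt_bigonCurvature_fst hs _ _).differentiableAt.hasDerivAt.comp K₁
    (hasDerivAt_exp K₁)).deriv.trans (mul_comm _ _)

lemma deriv_lone_snd {θ : ℝ} (hs : sin θ ≠ 0) (K₁ K₂ : ℝ) :
    deriv (fun K => Lone θ K₁ K) K₂ = exp K₂ * deriv (bigonCurvature θ (exp K₁)) (exp K₂) := by
  simp_rw [lone_eq_bigonCurvature]
  exact ((hasDerivAt_bigonCurvature_snd hs _ _).differentiableAt.hasDerivAt.comp K₂
    (hasDerivAt_exp K₂)).deriv.trans (mul_comm _ _)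

lemma deriv_lone_snd_eq {θ : ℝ} (hs : sin θ ≠ 0) (K₁ K₂ : ℝ) :
    deriv (fun K => Lone θ K₁ K) K₂ =
      -(2 * exp K₁ * exp K₂ * sin θ) / bigonDenom θ (exp K₁) (exp K₂) := by
  rw [deriv_lone_snd hs, (hasDerivAt_bigonCurvature_snd hs _ _).deriv]
  ring

lemma deriv_lone_snd_comm {θ : ℝ} (hs : sin θ ≠ 0) (K₁ K₂ : ℝ) :
    deriv (fun K => Lone θ K₂ K) K₁ = deriv (fun K => Lone θ K₁ K) K₂ := by
  rw [deriv_lone_snd_eq hs, deriv_lone_snd_eq hs, bigonDenom_comm]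
  ring

lemma deriv_lone_snd_neg {θ : ℝ} (hs : 0 < sin θ) (K₁ K₂ : ℝ) :
    deriv (fun K => Lone θ K₁ K) K₂ < 0 := by
  rw [deriv_lone_snd_eq hs.ne']
  exact div_neg_of_neg_of_pos (by simp only [neg_neg_iff_pos]; positivity)
    (bigonDenom_pos hs.ne' _ _)

lemma deriv_lone_fst_add_deriv_lone_snd_pos {θ : ℝ} (hs : 0 < sin θ) (K₁ K₂ : ℝ) :
    0 < deriv (fun K => Lone θ K K₂) K₁ + deriv (fun K => Lone θ K₁ K) K₂ := by
  rw [deriv_lone_fst hs.ne', deriv_lone_snd hs.ne']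
  exact bigonCurvature_eulerSum_pos hs (exp_pos K₁) _

theorem bigonJacobian_posDef_general (r₁ r₂ θ : ℝ)
    (hθ : θ ∈ Ioc 0 (π / 2))
    (J : Matrix (Fin 2) (Fin 2) ℝ)
    (hJ : J = bigonJacobian θ (Real.log (Real.cot r₁)) (Real.log (Real.cot r₂))) :
    J.IsSymm ∧ J 0 1 < 0 ∧ J 1 0 < 0 ∧
    0 < J 0 0 + J 0 1 ∧ 0 < J 1 0 + J 1 1 ∧
    (0 < J 0 0 ∧ 0 < J 1 1) ∧ J.PosDef := by
  have hs : 0 < sin θ := sin_pos_of_pos_of_lt_pi hθ.1 (by linarith [hθ.2, pi_pos])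
  set K₁ := Real.log (Real.cot r₁)
  set K₂ := Real.log (Real.cot r₂)
  have h10 : J 1 0 = J 0 1 := by
    simpa [hJ, bigonJacobian] using deriv_lone_snd_comm hs.ne' K₁ K₂
  have h01 : J 0 1 < 0 := by simpa [hJ, bigonJacobian] using deriv_lone_snd_neg hs K₁ K₂
  have hrow₀ : 0 < J 0 0 + J 0 1 := by
    simpa [hJ, bigonJacobian] using deriv_lone_fst_add_deriv_lone_snd_pos hs K₁ K₂
  have hrow₁ : 0 < J 1 0 + J 1 1 := by
    simpa [hJ, bigonJacobian, add_comm] using deriv_lone_fst_add_deriv_lone_snd_pos hs K₂ K₁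
  have hJsymm : J.IsSymm := Matrix.IsSymm.ext fun i j => by
    fin_cases i <;> fin_cases j <;> simp [h10]
  refine ⟨hJsymm, h01, h10 ▸ h01, hrow₀, hrow₁, ⟨by linarith, by linarith⟩,
    Matrix.posDef_of_offDiag_nonpos_of_rowSum_pos hJsymm (fun i j hij => ?_) (fun i => ?_)⟩
  · fin_cases i <;> fin_cases j <;> simp at hij ⊢ <;> linarith
  · fin_cases i <;> simpa [Fin.sum_univ_two]

/-- The Jacobian matrix `(∂Lᵢ/∂Kⱼ)` of a spherical bigon with radii
`r₁, r₂ ∈ (0, π/2)` and angle `θ ∈ (0, π/2]` is symmetric, has negative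
off-diagonal entries and positive row sums (hence is strictly diagonally
dominant with positive diagonal), and is positive definite. -/
theorem bigonJacobian_posDef (r₁ r₂ θ : ℝ)
    (hr₁ : r₁ ∈ Ioo 0 (π / 2)) (hr₂ : r₂ ∈ Ioo 0 (π / 2)) (hθ : θ ∈ Ioc 0 (π / 2))
    (J : Matrix (Fin 2) (Fin 2) ℝ)
    (hJ : J = bigonJacobian θ (Real.log (Real.cot r₁)) (Real.log (Real.cot r₂))) :
    J.IsSymm ∧ J 0 1 < 0 ∧ J 1 0 < 0 ∧
    0 < J 0 0 + J 0 1 ∧ 0 < J 1 0 + J 1 1 ∧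
    (0 < J 0 0 ∧ 0 < J 1 1) ∧ J.PosDef :=
  bigonJacobian_posDef_general r₁ r₂ θ hθ J hJ
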